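/- Let G = (V,E) be a noncompact connected metric graph with finitely many edges, p > 4, μ > 0, ρ ∈ [1/2,1], N ∈ ℕ⁺, and let {u_n} ⊂ H¹_μ(G) be a bounded Palais–Smale sequence for E_ρ(·,G) constrained on H¹_μ(G) with Lagrange multipliers λ_n → λ_ρ. Assume there exists a sequence {ζ_n} ⊂ ℝ⁺ with ζ_n → 0⁺ such that, for all large n, every linear subspace W_n of the tangent space T_{u_n}H¹_μ(G) = {v ∈ H¹(G) : (u_n, v)_{L²(G)} = 0} on which E_ρ''(u_n,G)[φ,φ] + λ_n‖φ‖₂² < −ζ_n‖φ‖²_{H¹(G)} holds for all φ ∈ W_n∖{0} satisfies dim W_n ≤ N. Then λ_ρ ≥ 0. -/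

import Mathlib

open MeasureTheory Filter Topology Set
open scoped ENNReal

/-- A metric graph with finitely many vertices and edges.  Each edge `e` has a length
`length e ∈ (0,∞]`; `length e = ⊤` means that `e` is a half-line `[0,∞)`. The
endpoint of `e` identified with `0` is `src e`; for a bounded edge the endpoint
identified with `ℓ_e` is `dst e`; a half-line has no second endpoint (`dst e = none`). -/
structure MetricGraph where
  V : Type
  E : Type
  fintV : Fintype V
  fintE : Fintype E
  decV : DecidableEq V
  length : E → ℝ≥0∞
  length_pos : ∀ e, 0 < length e
  src : E → V
  dst : E → Option V
  dst_none_iff : ∀ e, dst e = none ↔ length e = ⊤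

attribute [instance] MetricGraph.fintV MetricGraph.fintE MetricGraph.decV

namespace MetricGraph

variable (G : MetricGraph)

/-- The interval `I_e` that edge `e` is identified with. -/
def interval (e : G.E) : Set ℝ :=
  if G.length e = ⊤ then Set.Ici 0 else Set.Icc 0 (G.length e).toReal

/-- Two vertices are adjacent if some bounded edge joins them. -/
def Adj (v w : G.V) : Prop :=
  ∃ e, (G.src e = v ∧ G.dst e = some w) ∨ (G.src e = w ∧ G.dst e = some v)

/-- The graph is connected. -/
def Connected : Prop := ∀ v w : G.V, Relation.ReflTransGen G.Adj v w

/-- The graph is noncompact, i.e. it has at least one half-line. -/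
def Noncompact : Prop := ∃ e, G.length e = ⊤

/-- The graph is compact, i.e. all edges are bounded. -/
def IsCompactGraph : Prop := ∀ e, G.length e ≠ ⊤

/-- Raw data of a function on the graph: the family of edge functions, the family of their
derivatives, and the family of vertex values. -/
abbrev Fun : Type := (G.E → ℝ → ℝ) × (G.E → ℝ → ℝ) × (G.V → ℝ)

/-- The edge functions `u_e`. -/
def eFun (u : G.Fun) : G.E → ℝ → ℝ := u.1

/-- The edge derivatives `u_e'`. -/
def eDeriv (u : G.Fun) : G.E → ℝ → ℝ := u.2.1

/-- The vertex values `u(v)`. -/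
def vVal (u : G.Fun) : G.V → ℝ := u.2.2

/-- `u ∈ H¹(G)`: every edge function is continuous on `I_e` with derivative `eDeriv u e`
in the interior, both the function and its derivative are in `L²(I_e)`, and the edge
functions take the common value `vVal u v` at each vertex `v` (continuity at vertices). -/
def IsH1 (u : G.Fun) : Prop :=
  (∀ e, ContinuousOn (G.eFun u e) (G.interval e)) ∧
  (∀ e, ∀ x ∈ interior (G.interval e), HasDerivAt (G.eFun u e) (G.eDeriv u e x) x) ∧
  (∀ e, MemLp (G.eFun u e) 2 (volume.restrict (G.interval e))) ∧
  (∀ e, MemLp (G.eDeriv u e) 2 (volume.restrict (G.interval e))) ∧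
  (∀ e, G.eFun u e 0 = G.vVal u (G.src e)) ∧
  (∀ e v, G.dst e = some v → G.eFun u e (G.length e).toReal = G.vVal u v)

/-- `‖u‖₂²`. -/
noncomputable def l2sq (u : G.Fun) : ℝ := ∑ e, ∫ x in G.interval e, (G.eFun u e x) ^ 2

/-- `‖u'‖₂²`. -/
noncomputable def dsq (u : G.Fun) : ℝ := ∑ e, ∫ x in G.interval e, (G.eDeriv u e x) ^ 2

/-- `‖u‖²_{H¹(G)}`. -/
noncomputable def h1sq (u : G.Fun) : ℝ := G.dsq u + G.l2sq u

/-- `‖u‖_{H¹(G)}`. -/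
noncomputable def h1norm (u : G.Fun) : ℝ := Real.sqrt (G.h1sq u)

/-- The `L²(G)` inner product. -/
noncomputable def l2inner (u w : G.Fun) : ℝ :=
  ∑ e, ∫ x in G.interval e, G.eFun u e x * G.eFun w e x

/-- `∫_G u'w' dx`. -/
noncomputable def dinner (u w : G.Fun) : ℝ :=
  ∑ e, ∫ x in G.interval e, G.eDeriv u e x * G.eDeriv w e x

/-- The `H¹(G)` inner product. -/
noncomputable def h1inner (u w : G.Fun) : ℝ := G.dinner u w + G.l2inner u w

/-- `Σ_{v∈V} |u(v)|^{p-2} u(v) η(v)`. -/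
noncomputable def vertexTerm (p : ℝ) (u η : G.Fun) : ℝ :=
  ∑ v, |G.vVal u v| ^ (p - 2) * G.vVal u v * G.vVal η v

/-- `Σ_{v∈V} |u(v)|^p`. -/
noncomputable def vertexLp (p : ℝ) (u : G.Fun) : ℝ := ∑ v, |G.vVal u v| ^ p

/-- The energy functional `E_ρ(u, G) = ½‖u'‖₂² − (ρ/p) Σ_{v∈V} |u(v)|^p`. -/
noncomputable def energy (p ρ : ℝ) (u : G.Fun) : ℝ :=
  (1 / 2) * G.dsq u - (ρ / p) * G.vertexLp p u

/-- `E_ρ'(u, G)[η] = ∫_G u'η' dx − ρ Σ_{v∈V} |u(v)|^{p−2} u(v) η(v)`. -/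
noncomputable def energyDeriv (p ρ : ℝ) (u η : G.Fun) : ℝ :=
  G.dinner u η - ρ * G.vertexTerm p u η

/-- `E_ρ''(u, G)[w,w] = ∫_G |w'|² dx − (p−1) ρ Σ_{v∈V} |u(v)|^{p−2} w(v)²`. -/
noncomputable def energyDeriv2 (p ρ : ℝ) (u w : G.Fun) : ℝ :=
  G.dsq w - (p - 1) * ρ * ∑ v, |G.vVal u v| ^ (p - 2) * (G.vVal w v) ^ 2

/-- `(u, λ)` is a weak solution of `u'' = λ u` on every edge with the nonlinear vertex
conditions `Σ_{e ≻ v} u_e'(v) = −ρ |u(v)|^{p−2} u(v)` at every vertex, i.e.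
`∫_G u'η' dx + λ ∫_G uη dx = ρ Σ_{v∈V} |u(v)|^{p−2} u(v) η(v)` for all `η ∈ H¹(G)`. -/
def IsWeakSolution (p ρ lam : ℝ) (u : G.Fun) : Prop :=
  ∀ η : G.Fun, G.IsH1 η →
    G.dinner u η + lam * G.l2inner u η = ρ * G.vertexTerm p u η

end MetricGraph

/-! If `λ_ρ < 0`, place on a half-line `N + 2` disjointly supported translates of a fixed
`C¹` bump, stretched to length `L`. They vanish at every vertex, so on their span
`E_ρ''(u_n)[φ,φ] = ‖φ'‖₂²`, and stretching gives `‖φ'‖₂² ≤ (C / L²) ‖φ‖₂²`. For `L` and `n`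
large the form `E_ρ''(u_n)[φ,φ] + λ_n ‖φ‖₂²` is then close to `λ_ρ ‖φ‖₂² < -ζ_n ‖φ‖²_{H¹}`
on that span. Imposing `L²`-orthogonality to `u_n` costs one dimension, which leaves an
`(N + 1)`-dimensional subspace of the tangent space contradicting the Morse index bound. -/

theorem LinearMap.finrank_le_finrank_ker_add_one {K V : Type*} [Field K] [AddCommGroup V]
    [Module K V] [FiniteDimensional K V] (ℓ : V →ₗ[K] K) :
    Module.finrank K V ≤ Module.finrank K (LinearMap.ker ℓ) + 1 := by
  have hrank := ℓ.finrank_range_add_finrank_ker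
  have hrange := (LinearMap.range ℓ).finrank_le
  rw [Module.finrank_self] at hrange
  omega

theorem Finset.sum_mul_sq_of_pairwise_mul_eq_zero {ι : Type*} (s : Finset ι) (c g : ι → ℝ)
    (hg : ∀ i ∈ s, ∀ j ∈ s, i ≠ j → g i * g j = 0) :
    (∑ i ∈ s, c i * g i) ^ 2 = ∑ i ∈ s, c i ^ 2 * g i ^ 2 := by
  classical
  rw [sq, Finset.sum_mul_sum]
  refine Finset.sum_congr rfl fun i hi => ?_
  rw [Finset.sum_eq_single_of_mem i hi fun j hj hji => by
    rw [mul_mul_mul_comm, hg i hi j hj (Ne.symm hji), mul_zero]]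
  ring

noncomputable def bumpFamily (g : ℝ → ℝ) (L : ℝ) (i : ℕ) (x : ℝ) : ℝ := g (x / L - i)

section BumpFamily

variable {g : ℝ → ℝ} {L : ℝ}

lemma bumpFamily_eq_zero_of_nonpos (hg : Function.support g ⊆ Ioo 0 1) (hL : 0 ≤ L) (i : ℕ)
    {x : ℝ} (hx : x ≤ 0) : bumpFamily g L i x = 0 := by
  by_contra h
  have hpos := (hg h).1
  have hxL : x / L ≤ 0 := div_nonpos_of_nonpos_of_nonneg hx hL
  linarith [i.cast_nonneg (α := ℝ)]

lemma bumpFamily_mul_bumpFamily_eq_zero (hg : Function.support g ⊆ Ioo 0 1) {i j : ℕ}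
    (hij : i ≠ j) (x : ℝ) : bumpFamily g L i x * bumpFamily g L j x = 0 := by
  by_contra h
  obtain ⟨hi₀, hi₁⟩ := hg (left_ne_zero_of_mul h)
  obtain ⟨hj₀, hj₁⟩ := hg (right_ne_zero_of_mul h)
  have hij₁ : i < j + 1 := by exact_mod_cast (by linarith : (i : ℝ) < j + 1)
  have hij₂ : j < i + 1 := by exact_mod_cast (by linarith : (j : ℝ) < i + 1)
  omega

lemma hasDerivAt_bumpFamily (hg : Differentiable ℝ g) (L : ℝ) (i : ℕ) (x : ℝ) :
    HasDerivAt (bumpFamily g L i) (L⁻¹ * bumpFamily (deriv g) L i x) x := by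
  have h : HasDerivAt (fun y : ℝ => y / L - i) L⁻¹ x := by
    simpa using ((hasDerivAt_id x).div_const L).sub_const (i : ℝ)
  have := (hg _).hasDerivAt.comp x h
  rwa [mul_comm] at this

lemma continuous_bumpFamily (hg : Continuous g) (L : ℝ) (i : ℕ) :
    Continuous (bumpFamily g L i) := by
  unfold bumpFamily; fun_prop

lemma integrable_bumpFamily (hg : Integrable g) (hL : L ≠ 0) (i : ℕ) :
    Integrable (bumpFamily g L i) :=
  (hg.comp_sub_right (i : ℝ)).comp_div hL

lemma integral_bumpFamily (hL : 0 < L) (g : ℝ → ℝ) (i : ℕ) :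
    ∫ x, bumpFamily g L i x = L * ∫ x, g x := by
  have := Measure.integral_comp_div (fun y => g (y - i)) L
  rw [integral_sub_right_eq_self, abs_of_pos hL, smul_eq_mul] at this
  exact this

lemma integrable_sq_of_support_subset_Ioo (hg : Continuous g)
    (hgs : Function.support g ⊆ Ioo 0 1) : Integrable fun x => g x ^ 2 :=
  (hg.pow 2).integrable_of_hasCompactSupport <|
    HasCompactSupport.intro (isCompact_Icc (a := 0) (b := 1)) fun x hx => by
      simp [Function.notMem_support.1 fun h => hx (Ioo_subset_Icc_self (hgs h))]

lemma memLp_bumpFamily (hg : Continuous g) (hgs : Function.support g ⊆ Ioo 0 1) (hL : L ≠ 0)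
    (i : ℕ) : MemLp (bumpFamily g L i) 2 :=
  (memLp_two_iff_integrable_sq (continuous_bumpFamily hg L i).aestronglyMeasurable).2
    (integrable_bumpFamily (integrable_sq_of_support_subset_Ioo hg hgs) hL i)

lemma setIntegral_sum_bumpFamily_sq (hg : Continuous g) (hgs : Function.support g ⊆ Ioo 0 1)
    (hL : 0 < L) {m : ℕ} (c : Fin m → ℝ) :
    ∫ x in Ici 0, (∑ i, c i * bumpFamily g L i x) ^ 2 = L * (∫ x, g x ^ 2) * ∑ i, c i ^ 2 := by
  have hsq : ∀ x, (∑ i, c i * bumpFamily g L i x) ^ 2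
      = ∑ i, c i ^ 2 * bumpFamily (fun y => g y ^ 2) L i x := fun x =>
    Finset.sum_mul_sq_of_pairwise_mul_eq_zero _ _ _ fun i _ j _ hij =>
      bumpFamily_mul_bumpFamily_eq_zero hgs (Fin.val_injective.ne hij) x
  have hint (i : Fin m) : Integrable (bumpFamily (fun y => g y ^ 2) L i) :=
    integrable_bumpFamily (integrable_sq_of_support_subset_Ioo hg hgs) hL.ne' i
  simp_rw [hsq]
  rw [setIntegral_eq_integral_of_forall_compl_eq_zero fun x hx =>
      Finset.sum_eq_zero fun i _ => by
        have := bumpFamily_eq_zero_of_nonpos hgs hL.le i (not_le.1 hx).le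
        simp only [bumpFamily] at this ⊢
        rw [this]
        ring,
    integral_finsetSum _ fun i _ => (hint i).const_mul _]
  simp_rw [integral_const_mul, integral_bumpFamily hL, Finset.mul_sum]
  exact Finset.sum_congr rfl fun i _ => by ring

end BumpFamily

namespace MetricGraph

variable {G : MetricGraph}

lemma interval_of_length_eq_top {e : G.E} (he : G.length e = ⊤) : G.interval e = Ici 0 := by
  simp [interval, he]

lemma dsq_nonneg (u : G.Fun) : 0 ≤ G.dsq u :=
  Finset.sum_nonneg fun _ _ => integral_nonneg fun _ => sq_nonneg _

lemma energyDeriv2_of_vVal_eq_zero (p ρ : ℝ) (u : G.Fun) {φ : G.Fun} (hφ : G.vVal φ = 0) :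
    G.energyDeriv2 p ρ u φ = G.dsq φ := by
  simp [energyDeriv2, hφ]

lemma energyDeriv2_add_mul_l2sq_lt {p ρ lam ζ Λ : ℝ} {u φ : G.Fun} (hφ : G.vVal φ = 0)
    (hP : 0 < G.l2sq φ) (hD : G.dsq φ ≤ -Λ / 8 * G.l2sq φ) (hlam : lam < Λ / 2)
    (hζ : |ζ| < min 1 (-Λ / 8)) :
    G.energyDeriv2 p ρ u φ + lam * G.l2sq φ < -ζ * G.h1sq φ := by
  have hD₀ := G.dsq_nonneg φ
  have hlamP := mul_lt_mul_of_pos_right hlam hP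
  have hζ' : ζ * G.h1sq φ < min 1 (-Λ / 8) * G.h1sq φ :=
    mul_lt_mul_of_pos_right (abs_lt.1 hζ).2 (add_pos_of_nonneg_of_pos hD₀ hP)
  have : min 1 (-Λ / 8) * G.h1sq φ ≤ G.dsq φ + -Λ / 8 * G.l2sq φ := by
    rw [h1sq, mul_add]
    exact add_le_add (mul_le_of_le_one_left hD₀ (min_le_left _ _))
      (mul_le_mul_of_nonneg_right (min_le_right _ _) hP.le)
  rw [energyDeriv2_of_vVal_eq_zero p ρ u hφ]
  linarith

section

variable [DecidableEq G.E]

noncomputable def onEdge (e : G.E) : ((ℝ → ℝ) × (ℝ → ℝ)) →ₗ[ℝ] G.Fun :=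
  (LinearMap.single ℝ (fun _ => ℝ → ℝ) e ∘ₗ LinearMap.fst ℝ _ _).prod
    ((LinearMap.single ℝ (fun _ => ℝ → ℝ) e ∘ₗ LinearMap.snd ℝ _ _).prod 0)

@[simp] lemma eFun_onEdge (e : G.E) (g : (ℝ → ℝ) × (ℝ → ℝ)) :
    G.eFun (G.onEdge e g) = Pi.single e g.1 := rfl

@[simp] lemma eDeriv_onEdge (e : G.E) (g : (ℝ → ℝ) × (ℝ → ℝ)) :
    G.eDeriv (G.onEdge e g) = Pi.single e g.2 := rfl

@[simp] lemma vVal_onEdge (e : G.E) (g : (ℝ → ℝ) × (ℝ → ℝ)) :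
    G.vVal (G.onEdge e g) = 0 := rfl

lemma sum_integral_piSingle (e : G.E) (g : ℝ → ℝ) (F : G.E → (ℝ → ℝ) → ℝ → ℝ)
    (hF : ∀ e', F e' 0 = 0) :
    ∑ e', ∫ x in G.interval e', F e' ((Pi.single e g : G.E → ℝ → ℝ) e') x
      = ∫ x in G.interval e, F e g x := by
  rw [Fintype.sum_eq_single e fun e' he' => by simp [Pi.single_eq_of_ne he', hF]]
  simp

lemma l2sq_onEdge (e : G.E) (g : (ℝ → ℝ) × (ℝ → ℝ)) :
    G.l2sq (G.onEdge e g) = ∫ x in G.interval e, g.1 x ^ 2 :=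
  sum_integral_piSingle e g.1 (fun _ h x => h x ^ 2) fun _ => by simp; rfl

lemma dsq_onEdge (e : G.E) (g : (ℝ → ℝ) × (ℝ → ℝ)) :
    G.dsq (G.onEdge e g) = ∫ x in G.interval e, g.2 x ^ 2 :=
  sum_integral_piSingle e g.2 (fun _ h x => h x ^ 2) fun _ => by simp; rfl

lemma l2inner_onEdge (u : G.Fun) (e : G.E) (g : (ℝ → ℝ) × (ℝ → ℝ)) :
    G.l2inner u (G.onEdge e g) = ∫ x in G.interval e, G.eFun u e x * g.1 x :=
  sum_integral_piSingle e g.1 (fun e' h x => G.eFun u e' x * h x) fun _ => by simp; rfl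

lemma isH1_onEdge {e : G.E} (he : G.length e = ⊤) {g g' : ℝ → ℝ}
    (hd : ∀ x, HasDerivAt g (g' x) x) (hg : MemLp g 2 (volume.restrict (Ici 0)))
    (hg' : MemLp g' 2 (volume.restrict (Ici 0))) (h0 : g 0 = 0) :
    G.IsH1 (G.onEdge e (g, g')) := by
  refine ⟨fun e' => ?_, fun e' x _ => ?_, fun e' => ?_, fun e' => ?_, fun e' => ?_,
    fun e' v hv => ?_⟩ <;> obtain rfl | he' := eq_or_ne e' e <;>
    first
    | simp only [eFun_onEdge, eDeriv_onEdge, vVal_onEdge, Pi.single_eq_of_ne ‹e' ≠ e›,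
        Pi.zero_apply]
    | simp only [eFun_onEdge, eDeriv_onEdge, vVal_onEdge, Pi.single_eq_same]
  · exact (continuous_iff_continuousAt.2 fun x => (hd x).continuousAt).continuousOn
  · exact continuousOn_const
  · exact hd x
  · exact hasDerivAt_const x 0
  · rwa [interval_of_length_eq_top he]
  · exact MemLp.zero
  · rwa [interval_of_length_eq_top he]
  · exact MemLp.zero
  · exact h0
  · simp [(G.dst_none_iff e').2 he] at hv

noncomputable def bumpMap (e : G.E) (f : ℝ → ℝ) (L : ℝ) (m : ℕ) :
    (Fin m → ℝ) →ₗ[ℝ] G.Fun :=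
  G.onEdge e ∘ₗ Fintype.linearCombination ℝ fun i : Fin m =>
    (bumpFamily f L i, L⁻¹ • bumpFamily (deriv f) L i)

variable {e : G.E} {f : ℝ → ℝ} {L : ℝ} {m : ℕ}

lemma bumpMap_apply (c : Fin m → ℝ) :
    G.bumpMap e f L m c = G.onEdge e (fun x => ∑ i, c i * bumpFamily f L i x,
      fun x => L⁻¹ * ∑ i, c i * bumpFamily (deriv f) L i x) := by
  simp only [bumpMap, LinearMap.comp_apply, Fintype.linearCombination_apply]
  congr 1
  ext x <;> simp [Finset.sum_apply, Prod.fst_sum, Prod.snd_sum, Finset.mul_sum, mul_left_comm]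

lemma isH1_bumpMap (he : G.length e = ⊤) (hf : ContDiff ℝ 1 f) (hfs : tsupport f ⊆ Ioo 0 1)
    (hL : 0 < L) (c : Fin m → ℝ) :
    G.IsH1 (G.bumpMap e f L m c) := by
  have hf' : Function.support (deriv f) ⊆ Ioo 0 1 := support_deriv_subset.trans hfs
  have hf₀ : Function.support f ⊆ Ioo 0 1 := (subset_tsupport f).trans hfs
  have hfd : Continuous (deriv f) := hf.continuous_deriv le_rfl
  rw [bumpMap_apply]
  refine isH1_onEdge he (fun x => ?_) ?_ ?_ ?_
  · have := HasDerivAt.fun_sum (u := Finset.univ) fun (i : Fin m) _ =>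
      (hasDerivAt_bumpFamily (hf.differentiable one_ne_zero) L i x).const_mul (c i)
    refine this.congr_deriv ?_
    rw [Finset.mul_sum]
    exact Finset.sum_congr rfl fun i _ => by ring
  · exact (memLp_finsetSum _ fun (i : Fin m) _ =>
      (memLp_bumpFamily hf.continuous hf₀ hL.ne' i).const_mul (c i)).restrict _
  · exact ((memLp_finsetSum _ fun (i : Fin m) _ =>
      (memLp_bumpFamily hfd hf' hL.ne' i).const_mul (c i)).const_mul L⁻¹).restrict _
  · exact Finset.sum_eq_zero fun i _ => by
      rw [bumpFamily_eq_zero_of_nonpos hf₀ hL.le i le_rfl, mul_zero]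

lemma l2sq_bumpMap (he : G.length e = ⊤) (hf : ContDiff ℝ 1 f) (hfs : tsupport f ⊆ Ioo 0 1)
    (hL : 0 < L) (c : Fin m → ℝ) :
    G.l2sq (G.bumpMap e f L m c) = L * (∫ x, f x ^ 2) * ∑ i, c i ^ 2 := by
  rw [bumpMap_apply, l2sq_onEdge, interval_of_length_eq_top he]
  exact setIntegral_sum_bumpFamily_sq hf.continuous ((subset_tsupport f).trans hfs) hL c

lemma dsq_bumpMap (he : G.length e = ⊤) (hf : ContDiff ℝ 1 f) (hfs : tsupport f ⊆ Ioo 0 1)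
    (hL : 0 < L) (c : Fin m → ℝ) :
    G.dsq (G.bumpMap e f L m c) = L⁻¹ * (∫ x, deriv f x ^ 2) * ∑ i, c i ^ 2 := by
  rw [bumpMap_apply, dsq_onEdge, interval_of_length_eq_top he]
  simp_rw [mul_pow]
  rw [integral_const_mul, setIntegral_sum_bumpFamily_sq (hf.continuous_deriv le_rfl)
    (support_deriv_subset.trans hfs) hL c]
  field_simp

lemma l2inner_bumpMap (he : G.length e = ⊤) (hf : ContDiff ℝ 1 f) (hfs : tsupport f ⊆ Ioo 0 1)
    (hL : 0 < L) {u : G.Fun} (hu : MemLp (G.eFun u e) 2 (volume.restrict (Ici 0)))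
    (c : Fin m → ℝ) :
    G.l2inner u (G.bumpMap e f L m c)
      = ∑ i, c i * ∫ x in Ici 0, G.eFun u e x * bumpFamily f L i x := by
  rw [bumpMap_apply, l2inner_onEdge, interval_of_length_eq_top he]
  have hint (i : Fin m) : Integrable (fun x => c i * (G.eFun u e x * bumpFamily f L i x))
      (volume.restrict (Ici 0)) :=
    (hu.integrable_mul ((memLp_bumpFamily hf.continuous ((subset_tsupport f).trans hfs)
      hL.ne' i).restrict _)).const_mul (c i)
  simp_rw [← integral_const_mul]
  rw [← integral_finsetSum _ fun i _ => hint i]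
  exact integral_congr_ae (ae_of_all _ fun x => by
    simp only [Finset.mul_sum]; exact Finset.sum_congr rfl fun i _ => by ring)

lemma l2sq_bumpMap_pos (he : G.length e = ⊤) (hf : ContDiff ℝ 1 f) (hfs : tsupport f ⊆ Ioo 0 1)
    (hB : 0 < ∫ x, f x ^ 2) (hL : 0 < L) {c : Fin m → ℝ} (hc : c ≠ 0) :
    0 < G.l2sq (G.bumpMap e f L m c) := by
  obtain ⟨i, hi⟩ := Function.ne_iff.1 hc
  rw [l2sq_bumpMap he hf hfs hL]
  exact mul_pos (mul_pos hL hB) (Finset.sum_pos' (fun j _ => sq_nonneg (c j))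
    ⟨i, Finset.mem_univ i, pow_two_pos_of_ne_zero hi⟩)

end

theorem exists_submodule_dsq_le_of_length_eq_top {e : G.E} (he : G.length e = ⊤) {u : G.Fun}
    (hu : MemLp (G.eFun u e) 2 (volume.restrict (G.interval e))) (m : ℕ) {ε : ℝ} (hε : 0 < ε) :
    ∃ W : Submodule ℝ G.Fun, m ≤ Module.finrank ℝ W ∧ ∀ w ∈ W, G.IsH1 w ∧
      G.l2inner u w = 0 ∧ G.vVal w = 0 ∧ G.dsq w ≤ ε * G.l2sq w ∧ (w ≠ 0 → 0 < G.l2sq w) := by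
  classical
  rw [interval_of_length_eq_top he] at hu
  obtain ⟨f, hfs, -, hf, -, hf_half⟩ := exists_contDiff_tsupport_subset (n := 1)
    (Ioo_mem_nhds (by norm_num : (0 : ℝ) < 1 / 2) (by norm_num : (1 / 2 : ℝ) < 1))
  have hB : 0 < ∫ x, f x ^ 2 := integral_pos_of_integrable_nonneg_nonzero (x := 1 / 2)
    (hf.continuous.pow 2) (integrable_sq_of_support_subset_Ioo hf.continuous
      ((subset_tsupport f).trans hfs)) (fun x => sq_nonneg (f x)) (by rw [hf_half]; norm_num)
  obtain ⟨L, hAL, hL⟩ := ((((tendsto_pow_atTop two_ne_zero).const_mul_atTop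
    (mul_pos hε hB)).eventually_ge_atTop (∫ x, deriv f x ^ 2)).and
    (eventually_gt_atTop 0)).exists
  set Φ := G.bumpMap e f L (m + 1)
  set ℓ := Fintype.linearCombination ℝ fun i : Fin (m + 1) =>
    ∫ x in Ici 0, G.eFun u e x * bumpFamily f L i x
  have hΦ : Function.Injective Φ := (injective_iff_map_eq_zero Φ).2 fun c hc => by
    by_contra h
    have := l2sq_bumpMap_pos he hf hfs hB hL h
    rw [show G.bumpMap e f L (m + 1) c = 0 from hc] at this
    simp [l2sq, eFun] at this
  refine ⟨(LinearMap.ker ℓ).map Φ, ?_, ?_⟩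
  · rw [← LinearEquiv.finrank_eq (Submodule.equivMapOfInjective Φ hΦ _)]
    have := ℓ.finrank_le_finrank_ker_add_one
    rw [Module.finrank_fin_fun] at this
    omega
  · rintro _ ⟨c, hc, rfl⟩
    refine ⟨isH1_bumpMap he hf hfs hL c, ?_, by rw [bumpMap_apply, vVal_onEdge], ?_,
      fun h => l2sq_bumpMap_pos he hf hfs hB hL (by rintro rfl; exact h (map_zero Φ))⟩
    · rw [l2inner_bumpMap he hf hfs hL hu]
      simpa [ℓ, Fintype.linearCombination_apply, mul_comm] using hc
    · rw [dsq_bumpMap he hf hfs hL, l2sq_bumpMap he hf hfs hL]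
      calc L⁻¹ * (∫ x, deriv f x ^ 2) * ∑ i, c i ^ 2
          ≤ L⁻¹ * (ε * (∫ x, f x ^ 2) * L ^ 2) * ∑ i, c i ^ 2 := by gcongr
        _ = ε * (L * (∫ x, f x ^ 2) * ∑ i, c i ^ 2) := by field_simp

end MetricGraph

theorem limit_multiplier_nonneg_general (G : MetricGraph)
    (hnc : G.Noncompact) (p : ℝ)
    (ρ : ℝ)
    (u : ℕ → G.Fun) (lam : ℕ → ℝ)
    (hH1 : ∀ n, G.IsH1 (u n))
    (lamρ : ℝ) (hlamlim : Filter.Tendsto lam Filter.atTop (nhds lamρ))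
    (N : ℕ) (ζ : ℕ → ℝ)
    (hζlim : Filter.Tendsto ζ Filter.atTop (nhds 0))
    (hMorse : ∃ n₀ : ℕ, ∀ n ≥ n₀, ∀ W : Submodule ℝ G.Fun,
      (∀ w ∈ W, G.IsH1 w) → (∀ w ∈ W, G.l2inner (u n) w = 0) →
      (∀ φ ∈ W, φ ≠ 0 →
        G.energyDeriv2 p ρ (u n) φ + lam n * G.l2sq φ < -(ζ n) * G.h1sq φ) →
      FiniteDimensional ℝ W ∧ Module.finrank ℝ W ≤ N) :
    0 ≤ lamρ := by
  by_contra! hneg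
  obtain ⟨e, he⟩ := hnc
  obtain ⟨n₀, hMorse⟩ := hMorse
  have hδ : 0 < min 1 (-lamρ / 8) := lt_min one_pos (by linarith)
  obtain ⟨n, hn, hlam, hζ⟩ := ((eventually_ge_atTop n₀).and
    ((hlamlim.eventually_lt_const (by linarith : lamρ < lamρ / 2)).and
    (hζlim.eventually (Metric.ball_mem_nhds 0 hδ)))).exists
  rw [Real.dist_0_eq_abs] at hζ
  obtain ⟨W, hWrank, hW⟩ := G.exists_submodule_dsq_le_of_length_eq_top he ((hH1 n).2.2.1 e)
    (N + 1) (ε := -lamρ / 8) (by linarith)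
  have := (hMorse n hn W (fun w hw => (hW w hw).1) (fun w hw => (hW w hw).2.1)
    fun φ hφ hφ0 => G.energyDeriv2_add_mul_l2sq_lt (hW φ hφ).2.2.1 ((hW φ hφ).2.2.2.2 hφ0)
      (hW φ hφ).2.2.2.1 hlam hζ).2
  omega

/-- If the constrained Palais–Smale sequence carries approximate Morse
index information `m̂_{ζ_n}(u_n) ≤ N` (every subspace of the tangent space on which
`E_ρ''(u_n)[φ,φ] + λ_n ‖φ‖₂² < −ζ_n ‖φ‖²_{H¹}` has dimension at most `N`), then the
limit multiplier satisfies `λ_ρ ≥ 0`. -/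
theorem limit_multiplier_nonneg (G : MetricGraph) (hconn : G.Connected)
    (hnc : G.Noncompact) (p : ℝ) (hp : 4 < p) (μ : ℝ) (hμ : 0 < μ)
    (ρ : ℝ) (hρ : ρ ∈ Set.Icc (1 / 2 : ℝ) 1)
    (u : ℕ → G.Fun) (lam : ℕ → ℝ)
    (hH1 : ∀ n, G.IsH1 (u n)) (hmass : ∀ n, G.l2sq (u n) = μ)
    (hbdd : ∃ C : ℝ, ∀ n, G.h1norm (u n) ≤ C)
    (hlam : ∀ n, lam n = -(1 / μ) * G.energyDeriv p ρ (u n) (u n))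
    (hPS : ∀ ε > (0:ℝ), ∃ N : ℕ, ∀ n ≥ N, ∀ η : G.Fun, G.IsH1 η →
      |G.energyDeriv p ρ (u n) η + lam n * G.l2inner (u n) η| ≤ ε * G.h1norm η)
    (lamρ : ℝ) (hlamlim : Filter.Tendsto lam Filter.atTop (nhds lamρ))
    (N : ℕ) (hN : 0 < N) (ζ : ℕ → ℝ) (hζpos : ∀ n, 0 < ζ n)
    (hζlim : Filter.Tendsto ζ Filter.atTop (nhds 0))
    (hMorse : ∃ n₀ : ℕ, ∀ n ≥ n₀, ∀ W : Submodule ℝ G.Fun,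
      (∀ w ∈ W, G.IsH1 w) → (∀ w ∈ W, G.l2inner (u n) w = 0) →
      (∀ φ ∈ W, φ ≠ 0 →
        G.energyDeriv2 p ρ (u n) φ + lam n * G.l2sq φ < -(ζ n) * G.h1sq φ) →
      FiniteDimensional ℝ W ∧ Module.finrank ℝ W ≤ N) :
    0 ≤ lamρ :=
  limit_multiplier_nonneg_general G hnc p ρ u lam hH1 lamρ hlamlim N ζ hζlim hMorse
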